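/- arXiv:1306.5172 — 5 statements merged into one kernel-verified Lean document; each statement's English description precedes it below -/
import Mathlib

section
/- For the solution u of -ε u'' + u' = 2 with u(0)=u(1)=0, the derivative at the right endpoint satisfies u'(1) = 2 - 2/(ε(1 - e^{-1/ε})), so |u'(1)| ≥ 1/ε for all ε ∈ (0, 1/2]. Hence the derivative of the solution blows up at x = 1 as ε → 0. -/
open Real Set

theorem stmt_2 (ε : ℝ) (hε : 0 < ε)
    (u : ℝ → ℝ)
    (hu : ∀ x : ℝ, u x = 2 * x +
      2 * (Real.exp (-1 / ε) - Real.exp (-(1 - x) / ε)) / (1 - Real.exp (-1 / ε))) :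
    deriv u 1 = 2 - 2 / (ε * (1 - Real.exp (-1 / ε))) ∧
    (ε ≤ 1 / 2 → 1 / ε ≤ |deriv u 1|) := by
  have hufun : u = fun x => 2 * x +
      2 * (Real.exp (-1 / ε) - Real.exp (-(1 - x) / ε)) / (1 - Real.exp (-1 / ε)) :=
    funext hu
  set E := Real.exp (-1 / ε) with hE
  have hE1 : E < 1 := by
    rw [hE]
    have : -1 / ε < 0 := div_neg_of_neg_of_pos (by norm_num) hε
    calc Real.exp (-1 / ε) < Real.exp 0 := Real.exp_lt_exp.mpr this
    _ = 1 := Real.exp_zero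
  have hc : 0 < 1 - E := by linarith
  have hd : deriv u 1 = 2 - 2 / (ε * (1 - E)) := by
    have h1 : HasDerivAt (fun x : ℝ => -(1 - x) / ε) ε⁻¹ 1 := by
      have : HasDerivAt (fun x : ℝ => -(1 - x) / ε) (1 * ε⁻¹) 1 := by
        have h0 : HasDerivAt (fun x : ℝ => -(1 - x)) 1 1 := by
          have h00 := ((hasDerivAt_id (1:ℝ)).const_sub 1).neg
          simp only [neg_neg] at h00
          exact h00
        simpa [div_eq_mul_inv] using h0.mul_const ε⁻¹
      simpa using this
    have h2 : HasDerivAt (fun x : ℝ => Real.exp (-(1 - x) / ε)) ε⁻¹ 1 := by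
      have := (Real.hasDerivAt_exp (-(1-(1:ℝ))/ε)).comp 1 h1
      simpa [Function.comp_def] using this
    have h3 : HasDerivAt u (2 - 2 / (ε * (1 - E))) 1 := by
      rw [hufun]
      have h4 : HasDerivAt (fun x : ℝ => 2 * x) 2 1 := by
        simpa using (hasDerivAt_id (1:ℝ)).const_mul 2
      have h5 : HasDerivAt (fun x : ℝ =>
          2 * (E - Real.exp (-(1 - x) / ε)) / (1 - E))
          (2 * (0 - ε⁻¹) / (1 - E)) 1 := by
        exact (((hasDerivAt_const 1 E).sub h2).const_mul 2).div_const _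
      have := h4.add h5
      convert this using 1
      · rfl
      · rfl
      · rfl
      rw [div_eq_mul_inv, mul_inv]
      ring
    exact h3.deriv
  refine ⟨hd, fun hhalf => ?_⟩
  rw [hd]
  have hEpos : 0 < E := Real.exp_pos _
  have h2e : (2:ℝ) ≤ 1 / ε := by
    rw [le_div_iff₀ hε]; linarith
  have key : 2 / ε ≤ 2 / (ε * (1 - E)) := by
    apply div_le_div_of_nonneg_left (by norm_num) (by positivity)
    nlinarith
  have hdiv : 2 / ε = 2 * (1 / ε) := by ring
  rw [abs_of_nonpos (by linarith)]
  linarith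
end

section
/- For the constant-coefficient problem -ε u'' + b u' = f with b > 0 constant and f constant, the Il'in exponentially fitted scheme on a uniform mesh of width h, obtained by replacing ε with the fitted coefficient σ = (bh/2)·coth(bh/(2ε)) in the central difference scheme, produces a discrete solution that coincides with the exact continuous solution at every mesh point. -/
/-!
With `t = bh/(2ε)`, the fitted coefficient satisfies `σ sinh t = (bh/2) cosh t`, which is exactly the
condition for the central scheme to annihilate `x ↦ exp (b x / ε)`; since it is also exact on affine
functions, the exact solution satisfies the scheme at every point, and the error `U i - u (i h)` solves
the homogeneous scheme with zero boundary values. As `coth t > 1`, the homogeneous scheme is a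
three-term recurrence whose consecutive differences form a geometric sequence with nonnegative ratio
`(σ + bh/2)/(σ - bh/2)`, so vanishing at both ends forces the error to vanish identically.
-/

open Real

open Finset in
theorem eq_zero_of_threeTerm_recurrence {a c : ℝ} (ha : 0 < a) (hc : 0 ≤ c) {N : ℕ} (hN : N ≠ 0)
    {V : ℕ → ℝ} (hrec : ∀ j, j + 2 ≤ N → a * V (j + 2) - (a + c) * V (j + 1) + c * V j = 0)
    (h0 : V 0 = 0) (hN0 : V N = 0) : ∀ i ≤ N, V i = 0 := by
  have hdiff : ∀ j, j + 1 ≤ N → V (j + 1) - V j = (c / a) ^ j * V 1 := by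
    intro j hj
    induction j with
    | zero => simp [h0]
    | succ j ih =>
      rw [pow_succ, mul_right_comm, ← ih (by omega)]
      field_simp
      linear_combination hrec j hj
  have hsum : ∀ i ≤ N, V i = V 1 * ∑ j ∈ range i, (c / a) ^ j := by
    intro i hi
    rw [← sub_zero (V i), ← h0, ← sum_range_sub, mul_sum]
    exact sum_congr rfl fun j hj => by rw [hdiff j (by simp at hj; omega), mul_comm]
  have hV1 : V 1 = 0 := by
    have := hsum N le_rfl
    rw [hN0, eq_comm, mul_eq_zero] at this
    exact this.resolve_right (geom_sum_pos (by positivity) hN).ne'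
  intro i hi
  rw [hsum i hi, hV1, zero_mul]

theorem one_lt_cosh_div_sinh {t : ℝ} (ht : 0 < t) : 1 < cosh t / sinh t :=
  (one_lt_div (sinh_pos_iff.2 ht)).2 (sinh_lt_cosh t)

noncomputable def fittedDifference (σ b h : ℝ) (v : ℝ → ℝ) (x : ℝ) : ℝ :=
  -σ * (v (x + h) - 2 * v x + v (x - h)) / h ^ 2 + b * (v (x + h) - v (x - h)) / (2 * h)

theorem threeTerm_of_centralScheme {σ b h p q r g : ℝ} (hh : h ≠ 0)
    (H : -σ * (p - 2 * q + r) / h ^ 2 + b * (p - r) / (2 * h) = g) :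
    (σ - b * h / 2) * p - 2 * σ * q + (σ + b * h / 2) * r = -h ^ 2 * g := by
  rw [← H]
  field_simp
  ring

theorem fittedDifference_affine_add_exp {σ b h κ : ℝ} (hh : h ≠ 0)
    (hσ : σ * sinh (κ * h / 2) = b * h / 2 * cosh (κ * h / 2)) (α β γ x : ℝ) :
    fittedDifference σ b h (fun y => α * y + β * exp (κ * y) + γ) x = α * b := by
  set C := cosh (κ * h / 2)
  set S := sinh (κ * h / 2)
  have hplus : exp (κ * (x + h)) = exp (κ * x) * (C + S) ^ 2 := by
    rw [cosh_add_sinh, ← exp_nat_mul, ← exp_add]; ring_nf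
  have hminus : exp (κ * (x - h)) = exp (κ * x) * (C - S) ^ 2 := by
    rw [cosh_sub_sinh, ← exp_nat_mul, ← exp_add]; ring_nf
  have hCS : C ^ 2 - S ^ 2 = 1 := cosh_sq_sub_sinh_sq _
  simp only [fittedDifference]
  rw [hplus, hminus]
  set E := exp (κ * x)
  field_simp
  linear_combination (-8 * β * E * S) * hσ - 4 * σ * β * E * hCS

theorem fittedDifference_exact_solution {ε b h σ f : ℝ} (hε : ε ≠ 0) (hb : b ≠ 0) (hh : h ≠ 0)
    (hσ : σ = b * h / 2 * (cosh (b * h / (2 * ε)) / sinh (b * h / (2 * ε)))) (x : ℝ) :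
    fittedDifference σ b h
      (fun y => f / b * (y - (exp (b * y / ε) - 1) / (exp (b / ε) - 1))) x = f := by
  have hfit : σ * sinh (b / ε * h / 2) = b * h / 2 * cosh (b / ε * h / 2) := by
    rw [show b / ε * h / 2 = b * h / (2 * ε) by ring, hσ]
    field_simp [sinh_ne_zero.2 (by positivity)]
  have hsplit : (fun y => f / b * (y - (exp (b * y / ε) - 1) / (exp (b / ε) - 1))) =
      fun y => f / b * y + -(f / b / (exp (b / ε) - 1)) * exp (b / ε * y) +
        f / b / (exp (b / ε) - 1) := by
    funext y
    rw [mul_div_right_comm]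
    ring
  rw [hsplit, fittedDifference_affine_add_exp hh hfit]
  field_simp

theorem threeTerm_recurrence_of_scheme {σ b h f : ℝ} (hh : h ≠ 0) {N : ℕ} {U : ℕ → ℝ}
    (hU : ∀ i : ℕ, 1 ≤ i → i ≤ N - 1 →
      -σ * (U (i + 1) - 2 * U i + U (i - 1)) / h ^ 2 + b * (U (i + 1) - U (i - 1)) / (2 * h) = f)
    {v : ℝ → ℝ} (hv : ∀ x, fittedDifference σ b h v x = f) {V : ℕ → ℝ}
    (hV : V = fun i => U i - v (i * h)) (j : ℕ) (hj : j + 2 ≤ N) :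
    (σ - b * h / 2) * V (j + 2) - ((σ - b * h / 2) + (σ + b * h / 2)) * V (j + 1) +
      (σ + b * h / 2) * V j = 0 := by
  have hUj := hU (j + 1) (by omega) (by omega)
  have hvj := hv ((j + 1) * h)
  simp only [Nat.add_sub_cancel] at hUj
  simp only [fittedDifference, show ((j : ℝ) + 1) * h + h = ((j + 2 : ℕ) : ℝ) * h by push_cast; ring,
    show ((j : ℝ) + 1) * h - h = j * h by ring] at hvj
  subst hV
  push_cast at hvj ⊢
  linear_combination threeTerm_of_centralScheme hh hUj - threeTerm_of_centralScheme hh hvj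

theorem stmt_8 (ε b f : ℝ) (hε : 0 < ε) (hb : 0 < b) (N : ℕ) (hN : 2 ≤ N)
    (h : ℝ) (hh : h = 1 / N)
    (σ : ℝ) (hσ : σ = (b * h / 2) * (Real.cosh (b * h / (2 * ε)) / Real.sinh (b * h / (2 * ε))))
    (u : ℝ → ℝ)
    (hu : ∀ x : ℝ, u x = (f / b) * (x - (Real.exp (b * x / ε) - 1) / (Real.exp (b / ε) - 1)))
    (U : ℕ → ℝ) (hU0 : U 0 = 0) (hUN : U N = 0)
    (hscheme : ∀ i : ℕ, 1 ≤ i → i ≤ N - 1 →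
      -σ * (U (i + 1) - 2 * U i + U (i - 1)) / h ^ 2 +
        b * (U (i + 1) - U (i - 1)) / (2 * h) = f) :
    ∀ i : ℕ, i ≤ N → U i = u (i * h) := by
  have hNh : (N : ℝ) * h = 1 := by rw [hh]; field_simp [show (N : ℝ) ≠ 0 by norm_cast; omega]
  have hh0 : 0 < h := by rw [hh]; exact one_div_pos.2 (by exact_mod_cast (by omega : 0 < N))
  have hexact : ∀ x, fittedDifference σ b h u x = f := by
    rw [funext hu]
    exact fittedDifference_exact_solution hε.ne' hb.ne' hh0.ne' hσ
  set V : ℕ → ℝ := fun i => U i - u (i * h) with hV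
  have hVrec := threeTerm_recurrence_of_scheme hh0.ne' hscheme hexact hV
  have hV0 : V 0 = 0 := by simp [hV, hU0, hu]
  have hVN : V N = 0 := by
    have hD : exp (b / ε) - 1 ≠ 0 := (sub_pos.2 (one_lt_exp_iff.2 (by positivity))).ne'
    simp [hV, hNh, hUN, hu, hD]
  have ha : 0 < σ - b * h / 2 := by
    rw [hσ, sub_pos]
    exact lt_mul_of_one_lt_right (by positivity) (one_lt_cosh_div_sinh (by positivity))
  intro i hi
  exact sub_eq_zero.1
    (eq_zero_of_threeTerm_recurrence ha (by linarith [mul_pos hb hh0]) (by omega) hVrec hV0 hVN i hi)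
end

section
/- For the problem -ε u'' + u' = 2 on (0,1) with u(0) = u(1) = 0, the solution satisfies the a priori derivative bound |u'(x)| ≤ C(1 + ε^{-1} e^{-(1-x)/ε}) for all x ∈ [0,1], with constant C = 4, valid for all 0 < ε ≤ 1/2. -/
open Real Set

/- Differentiating the closed form gives u' = 2 - 2 ε⁻¹ e^{-(1-x)/ε} / (1 - e^{-1/ε}), so the
smooth part contributes 2 and the layer part is ε⁻¹ e^{-(1-x)/ε} times 2 / (1 - e^{-1/ε}).
Since e^{-1/ε} ≤ ε ≤ 1/2, that denominator is at least 1/2. -/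

lemma exp_neg_inv_le {ε : ℝ} (hε : 0 < ε) : exp (-ε⁻¹) ≤ ε := by
  rw [exp_neg, inv_le_comm₀ (exp_pos _) hε]
  linarith [add_one_le_exp ε⁻¹]

lemma hasDerivAt_exp_boundary_layer (ε x : ℝ) :
    HasDerivAt (fun y => exp (-(1 - y) / ε)) (ε⁻¹ * exp (-(1 - x) / ε)) x := by
  have hlin : HasDerivAt (fun y : ℝ => -(1 - y) / ε) ε⁻¹ x := by
    simpa using (((hasDerivAt_id x).sub_const 1).div_const ε)
  simpa [mul_comm] using hlin.exp

lemma hasDerivAt_two_mul_add_layer (ε a B x : ℝ) :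
    HasDerivAt (fun y => 2 * y + 2 * (a - exp (-(1 - y) / ε)) / B)
      (2 - 2 * (ε⁻¹ * exp (-(1 - x) / ε)) / B) x := by
  refine (((hasDerivAt_id x).const_mul 2).add
    ((((hasDerivAt_exp_boundary_layer ε x).const_sub a).const_mul 2).div_const B)).congr_deriv ?_
  ring

lemma abs_two_sub_div_le {t B : ℝ} (ht : 0 ≤ t) (hB : 1 / 2 ≤ B) :
    |2 - 2 * t / B| ≤ 4 * (1 + t) := by
  have hB0 : 0 < B := by linarith
  have hle : 2 * t / B ≤ 4 * t := by
    rw [div_le_iff₀ hB0]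
    nlinarith
  have hnn : 0 ≤ 2 * t / B := by positivity
  exact abs_le.mpr ⟨by linarith, by linarith⟩

theorem stmt_13 (ε : ℝ) (hε : 0 < ε) (hε2 : ε ≤ 1 / 2)
    (u : ℝ → ℝ)
    (hu : ∀ x : ℝ, u x = 2 * x +
      2 * (Real.exp (-1 / ε) - Real.exp (-(1 - x) / ε)) / (1 - Real.exp (-1 / ε))) :
    ∀ x ∈ Icc (0 : ℝ) 1,
      |deriv u x| ≤ 4 * (1 + ε⁻¹ * Real.exp (-(1 - x) / ε)) := by
  intro x _
  obtain rfl : u = _ := funext hu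
  have hsmall : exp (-1 / ε) ≤ 1 / 2 := by
    rw [neg_div, one_div]
    exact (exp_neg_inv_le hε).trans hε2
  rw [(hasDerivAt_two_mul_add_layer ε _ _ x).deriv]
  exact abs_two_sub_div_le (by positivity) (by linarith)
end

section
/- If A is a square real matrix with nonpositive off-diagonal entries such that there exists a vector e > 0 (entrywise) with Ae > 0 (entrywise), then A is invertible and A⁻¹ has nonnegative entries. -/
/-!
Monotonicity argument: if `A x ≥ 0` but some `x i < 0`, take `s = min_j x j / e j < 0`, attained
at `k`. Then `y = x - s • e` is nonnegative with `y k = 0`, so the sign pattern of `A` forces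
`(A y) k ≤ 0`, while `(A y) k = (A x) k - s (A e) k > 0`. Hence `A x ≥ 0 → x ≥ 0`; applied to
`±x` this gives injectivity of `x ↦ A x`, and applied to the columns of `A⁻¹` their nonnegativity.
-/

open Matrix

namespace Matrix

variable {ι K : Type*} [Fintype ι] [Field K] [LinearOrder K] [IsStrictOrderedRing K]

lemma mulVec_apply_nonpos_of_apply_eq_zero {A : Matrix ι ι K} {k : ι}
    (hoff : ∀ j, k ≠ j → A k j ≤ 0) {y : ι → K} (hy : 0 ≤ y) (hyk : y k = 0) :
    (A *ᵥ y) k ≤ 0 := by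
  refine Finset.sum_nonpos fun j _ => ?_
  rcases eq_or_ne k j with rfl | hkj
  · simp [hyk]
  · exact mul_nonpos_of_nonpos_of_nonneg (hoff j hkj) (hy j)

def IsZMatrix (A : Matrix ι ι K) : Prop := ∀ i j, i ≠ j → A i j ≤ 0

variable {A : Matrix ι ι K} (hoff : A.IsZMatrix)
  {e : ι → K} (he : ∀ i, 0 < e i) (hAe : ∀ i, 0 < (A *ᵥ e) i)
include hoff he hAe

lemma nonneg_of_mulVec_nonneg {x : ι → K} (hx : 0 ≤ A *ᵥ x) : 0 ≤ x := by
  by_contra hneg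
  obtain ⟨i, hi⟩ : ∃ i, x i < 0 := by simpa [Pi.le_def] using hneg
  have : Nonempty ι := ⟨i⟩
  obtain ⟨k, hk⟩ := Finite.exists_min fun j => x j / e j
  set s := x k / e k
  have hs : s < 0 := (hk i).trans_lt (div_neg_of_neg_of_pos hi (he i))
  have hy : 0 ≤ x - s • e := fun j => by
    have := (le_div_iff₀ (he j)).mp (hk j)
    simp only [Pi.zero_apply, Pi.sub_apply, Pi.smul_apply, smul_eq_mul]
    linarith
  have hyk : (x - s • e) k = 0 := by
    simp [s, div_mul_cancel₀ _ (he k).ne']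
  have hAy : (A *ᵥ (x - s • e)) k = (A *ᵥ x) k - s * (A *ᵥ e) k := by
    simp [mulVec_sub, mulVec_smul]
  have := mulVec_apply_nonpos_of_apply_eq_zero (hoff k) hy hyk
  linarith [show 0 ≤ (A *ᵥ x) k from hx k, mul_neg_of_neg_of_pos hs (hAe k)]

lemma mulVec_injective_of_isZMatrix : Function.Injective A.mulVec := by
  intro u v huv
  have h₁ := nonneg_of_mulVec_nonneg hoff he hAe (x := u - v) (by simp [mulVec_sub, huv])
  have h₂ := nonneg_of_mulVec_nonneg hoff he hAe (x := v - u) (by simp [mulVec_sub, huv])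
  exact le_antisymm (sub_nonneg.mp h₂) (sub_nonneg.mp h₁)

variable [DecidableEq ι]

lemma isUnit_of_isZMatrix : IsUnit A :=
  mulVec_injective_iff_isUnit.mp (mulVec_injective_of_isZMatrix hoff he hAe)

lemma inv_nonneg_of_isZMatrix (i j : ι) : 0 ≤ A⁻¹ i j := by
  have hcol : A *ᵥ (A⁻¹ *ᵥ Pi.single j 1) = Pi.single j 1 := by
    rw [mulVec_mulVec, mul_nonsing_inv A
      ((isUnit_iff_isUnit_det A).mp (isUnit_of_isZMatrix hoff he hAe)), one_mulVec]
  have := nonneg_of_mulVec_nonneg hoff he hAe (hcol ▸ Pi.single_nonneg.mpr zero_le_one) i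
  simpa [mulVec_single_one] using this

end Matrix

theorem stmt_17 (n : ℕ) (A : Matrix (Fin n) (Fin n) ℝ)
    (hoff : ∀ i j : Fin n, i ≠ j → A i j ≤ 0)
    (e : Fin n → ℝ) (he : ∀ i, 0 < e i) (hAe : ∀ i, 0 < A.mulVec e i) :
    IsUnit A ∧ ∀ i j : Fin n, 0 ≤ A⁻¹ i j :=
  ⟨isUnit_of_isZMatrix hoff he hAe, inv_nonneg_of_isZMatrix hoff he hAe⟩
end

section
/- If A is an invertible real matrix with A⁻¹ ≥ 0 entrywise and e is an entrywise positive vector with (Ae)_i ≥ 1 for all i, then for any vectors u, f with Au = f, the bound ‖u‖_∞ ≤ ‖e‖_∞ · ‖f‖_∞ holds. Applied to the upwind matrix with e_i = x_i = ih (for which (Ae)_i = 1), this gives the ε-uniform stability bound ‖u‖_∞ ≤ ‖f‖_∞. -/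
open Matrix

theorem stmt_18 (n : ℕ) (A : Matrix (Fin n) (Fin n) ℝ)
    (hA : IsUnit A) (hinv : ∀ i j : Fin n, 0 ≤ A⁻¹ i j)
    (e : Fin n → ℝ) (he : ∀ i, 0 < e i) (hAe : ∀ i, 1 ≤ A.mulVec e i)
    (u f : Fin n → ℝ) (huf : A.mulVec u = f) :
    ∀ i : Fin n, |u i| ≤ (⨆ j : Fin n, |e j|) * ⨆ j : Fin n, |f j| := by
  intro i
  have hne : Nonempty (Fin n) := ⟨i⟩
  have hdet : IsUnit A.det := (Matrix.isUnit_iff_isUnit_det A).mp hA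
  have hu : u = A⁻¹.mulVec f := by
    rw [← huf, Matrix.mulVec_mulVec, Matrix.nonsing_inv_mul A hdet, Matrix.one_mulVec]
  set E := ⨆ j : Fin n, |e j| with hE
  set F := ⨆ j : Fin n, |f j| with hF
  have hbddE : BddAbove (Set.range fun j : Fin n => |e j|) := Set.finite_range _ |>.bddAbove
  have hbddF : BddAbove (Set.range fun j : Fin n => |f j|) := Set.finite_range _ |>.bddAbove
  have hFle : ∀ j, |f j| ≤ F := fun j => le_ciSup hbddF j
  have hEle : ∀ j, |e j| ≤ E := fun j => le_ciSup hbddE j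
  have hF0 : 0 ≤ F := le_trans (abs_nonneg _) (hFle i)
  -- row sum of A⁻¹ bounded by e i
  have hrow : ∑ j, A⁻¹ i j ≤ e i := by
    calc ∑ j, A⁻¹ i j ≤ ∑ j, A⁻¹ i j * A.mulVec e j := by
          apply Finset.sum_le_sum
          intro j _
          nlinarith [hinv i j, hAe j]
      _ = (A⁻¹ * A).mulVec e i := by
          simp [Matrix.mulVec, Matrix.mul_apply, dotProduct, Finset.mul_sum,
            Finset.sum_mul, mul_assoc]
          rw [Finset.sum_comm]
      _ = e i := by rw [Matrix.nonsing_inv_mul A hdet, Matrix.one_mulVec]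
  have h1 : |u i| ≤ ∑ j, A⁻¹ i j * |f j| := by
    rw [hu]
    calc |A⁻¹.mulVec f i| = |∑ j, A⁻¹ i j * f j| := by
          simp [Matrix.mulVec, dotProduct]
      _ ≤ ∑ j, |A⁻¹ i j * f j| := Finset.abs_sum_le_sum_abs _ _
      _ = ∑ j, A⁻¹ i j * |f j| := by
          apply Finset.sum_congr rfl
          intro j _
          rw [abs_mul, abs_of_nonneg (hinv i j)]
  have h2 : ∑ j, A⁻¹ i j * |f j| ≤ (∑ j, A⁻¹ i j) * F := by
    rw [Finset.sum_mul]
    exact Finset.sum_le_sum fun j _ => mul_le_mul_of_nonneg_left (hFle j) (hinv i j)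
  have h3 : (∑ j, A⁻¹ i j) * F ≤ E * F := by
    apply mul_le_mul_of_nonneg_right _ hF0
    exact hrow.trans ((le_abs_self _).trans (hEle i))
  linarith
end
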